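/- Let n ≥ 0 be a natural number, let d be a rational number, let S : ℕ → ℚ and P : ℕ → ℕ → ℚ be arbitrary functions, and define a(n,k) = C(2n+1, n−k) + 2·Σ_{i=k}^{n} (−1)^{i−k} C(3n+2, n−i) C(i−k+n, n), where C(m,j) denotes the binomial coefficient. Then the following identity of rational numbers holds: (1/3)·( d·(d² − Σ_{k=0}^{n} C(2n+1, n−k)·S(k))/2 − Σ_{i=0}^{n} C(3n+2, n−i)·Σ_{b=0}^{i} ( (−1)^b · d · C(b+n, n) · S(i−b) − 2^{b+n} · P(i−b, b) ) ) = (1/6)·( d³ − Σ_{k=0}^{n} d·a(n,k)·S(k) + Σ_{k=0}^{n} Σ_{a=0}^{k} 2^{k−a+n+1} · C(3n+2, n−k) · P(a, k−a) ). (This is the coefficient rearrangement that converts the generalized double point formula expression (1/3)((d(d²−A))/2 − B), with A = Σ_{k} C(2n+1,n−k)·deg s_k(T_X) and B = Σ_{i} C(3n+2,n−i)·Σ_{a+b=i}((−1)^b d C(b+n,n) deg s_a(T_X) − 2^{b+n} deg(s_a(T_X)·s_b(T_X))), into the closed form of the main theorem for the degree of the 3-secant variety.) -/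
import Mathlib

open Finset

/-- The coefficient `a(n,k) = C(2n+1, n−k) + 2·Σ_{i=k}^{n} (−1)^{i−k} C(3n+2, n−i) C(i−k+n, n)`
appearing in the degree formula for the 3-secant variety. -/
def secantCoeff (n k : ℕ) : ℚ :=
  (Nat.choose (2 * n + 1) (n - k) : ℚ) +
    2 * ∑ i ∈ Finset.Icc k n,
      (-1 : ℚ) ^ (i - k) * (Nat.choose (3 * n + 2) (n - i) : ℚ) *
        (Nat.choose (i - k + n) n : ℚ)

private lemma swap_tri (N : ℕ) (f : ℕ → ℕ → ℚ) :
    ∑ k ∈ Finset.range (N + 1), ∑ i ∈ Finset.Icc k N, f k i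
      = ∑ i ∈ Finset.range (N + 1), ∑ k ∈ Finset.range (i + 1), f k i := by
  rw [Finset.sum_comm' (t' := Finset.range (N + 1)) (s' := fun i => Finset.range (i + 1))]
  intro k i
  simp only [Finset.mem_range, Finset.mem_Icc]
  omega

private lemma reflect_tri (i : ℕ) (f : ℕ → ℚ) :
    ∑ k ∈ Finset.range (i + 1), f k = ∑ b ∈ Finset.range (i + 1), f (i - b) := by
  rw [← Finset.sum_range_reflect]
  simp only [Nat.add_sub_cancel]

/-- The coefficient rearrangement converting the generalized double point formula expression
`(1/3)((d(d²−A))/2 − B)` into the closed form of the main theorem for the degree of the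
3-secant variety. -/
theorem secant_degree_rearrangement (n : ℕ) (d : ℚ) (S : ℕ → ℚ) (P : ℕ → ℕ → ℚ) :
    (1 / 3 : ℚ) *
      (d * (d ^ 2 - ∑ k ∈ Finset.range (n + 1),
          (Nat.choose (2 * n + 1) (n - k) : ℚ) * S k) / 2
        - ∑ i ∈ Finset.range (n + 1),
            (Nat.choose (3 * n + 2) (n - i) : ℚ) *
              ∑ b ∈ Finset.range (i + 1),
                ((-1 : ℚ) ^ b * d * (Nat.choose (b + n) n : ℚ) * S (i - b)
                  - 2 ^ (b + n) * P (i - b) b))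
    = (1 / 6 : ℚ) *
        (d ^ 3 - ∑ k ∈ Finset.range (n + 1), d * secantCoeff n k * S k
          + ∑ k ∈ Finset.range (n + 1), ∑ a ∈ Finset.range (k + 1),
              2 ^ (k - a + n + 1) * (Nat.choose (3 * n + 2) (n - k) : ℚ) * P a (k - a)) := by
  set A := ∑ k ∈ Finset.range (n + 1), (Nat.choose (2 * n + 1) (n - k) : ℚ) * S k with hA
  set U := ∑ i ∈ Finset.range (n + 1), (Nat.choose (3 * n + 2) (n - i) : ℚ) *
      ∑ b ∈ Finset.range (i + 1),
        (-1 : ℚ) ^ b * d * (Nat.choose (b + n) n : ℚ) * S (i - b) with hU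
  set V := ∑ i ∈ Finset.range (n + 1), (Nat.choose (3 * n + 2) (n - i) : ℚ) *
      ∑ b ∈ Finset.range (i + 1), (2 : ℚ) ^ (b + n) * P (i - b) b with hV
  have key1 : ∑ k ∈ Finset.range (n + 1), d * secantCoeff n k * S k = d * A + 2 * U := by
    have expand : ∀ k ∈ Finset.range (n + 1), d * secantCoeff n k * S k
        = (Nat.choose (2 * n + 1) (n - k) : ℚ) * S k * d
          + ∑ i ∈ Finset.Icc k n,
              ((-1 : ℚ) ^ (i - k) * (Nat.choose (3 * n + 2) (n - i) : ℚ) *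
                (Nat.choose (i - k + n) n : ℚ)) * (2 * d * S k) := by
      intro k _
      rw [secantCoeff, ← Finset.sum_mul]
      ring
    rw [Finset.sum_congr rfl expand, Finset.sum_add_distrib]
    congr 1
    · rw [hA, Finset.mul_sum]; exact Finset.sum_congr rfl fun k _ => by ring
    · rw [swap_tri n]
      rw [hU, Finset.mul_sum]
      refine Finset.sum_congr rfl fun i hi => ?_
      simp only [Finset.mem_range] at hi
      rw [reflect_tri i]
      rw [Finset.mul_sum, Finset.mul_sum]
      refine Finset.sum_congr rfl fun b hb => ?_
      simp only [Finset.mem_range] at hb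
      have h1 : i - (i - b) = b := by omega
      rw [h1]
      ring
  have key2 : ∑ k ∈ Finset.range (n + 1), ∑ a ∈ Finset.range (k + 1),
      (2 : ℚ) ^ (k - a + n + 1) * (Nat.choose (3 * n + 2) (n - k) : ℚ) * P a (k - a)
      = 2 * V := by
    rw [hV, Finset.mul_sum]
    refine Finset.sum_congr rfl fun i hi => ?_
    rw [reflect_tri i, Finset.mul_sum, Finset.mul_sum]
    refine Finset.sum_congr rfl fun b hb => ?_
    simp only [Finset.mem_range] at hb
    have h1 : i - (i - b) = b := by omega
    rw [h1]
    ring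
  have key3 : ∑ i ∈ Finset.range (n + 1), (Nat.choose (3 * n + 2) (n - i) : ℚ) *
      ∑ b ∈ Finset.range (i + 1),
        ((-1 : ℚ) ^ b * d * (Nat.choose (b + n) n : ℚ) * S (i - b)
          - 2 ^ (b + n) * P (i - b) b) = U - V := by
    rw [hU, hV, ← Finset.sum_sub_distrib]
    refine Finset.sum_congr rfl fun i _ => ?_
    rw [Finset.sum_sub_distrib, mul_sub]
  rw [key1, key2, key3]
  ring
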